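/- Let K be a field, n ≥ 1, λ ∈ K, and let X = V(P_n(y_1,...,y_n) + λ) ⊆ 𝔸^n_K be the hypersurface defined by the continuant polynomial plus λ. Then X is singular (i.e., there is a point of X at which all n partial derivatives of P_n + λ vanish) if and only if n = 2m is even and λ = (-1)^{m+1}. -/
import Mathlib


/-- The continuant polynomial evaluated on a list:
`cont [] = 1`, `cont [a] = a`, `cont (a :: b :: l) = a * cont (b :: l) - cont l`. -/
def cont {R : Type*} [CommRing R] : List R → R
  | [] => 1
  | [a] => a
  | a :: b :: l => a * cont (b :: l) - cont l


/-- The continuant polynomial `P_n` in the variables `X a, X (a+1), ..., X (a+n-1)`. -/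
noncomputable def contX (a n : ℕ) : MvPolynomial ℕ ℤ :=
  cont ((List.range n).map fun i => MvPolynomial.X (a + i))

open MvPolynomial

theorem range_map_cons (b m : ℕ) :
    (List.range (m+1)).map (fun i => (MvPolynomial.X (b+i) : MvPolynomial ℕ ℤ)) =
      MvPolynomial.X b :: (List.range m).map (fun i => MvPolynomial.X (b+1+i)) := by
  rw [List.range_succ_eq_map, List.map_cons, List.map_map]
  simp only [Nat.add_zero]
  refine congrArg _ (List.map_congr_left fun i _ => ?_)
  simp only [Function.comp]
  congr 1
  omega

theorem contX_zero (a : ℕ) : contX a 0 = 1 := by simp [contX, cont]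

theorem contX_one (a : ℕ) : contX a 1 = MvPolynomial.X a := by simp [contX, cont]

theorem contX_succ_succ (a n : ℕ) :
    contX a (n+2) = MvPolynomial.X a * contX (a+1) (n+1) - contX (a+2) n := by
  unfold contX
  rw [range_map_cons a (n+1), range_map_cons (a+1) n,
    show a+1+1 = a+2 from rfl]
  simp [cont]

theorem pderiv_contX (k : ℕ) : ∀ (n s : ℕ),
    MvPolynomial.pderiv k (contX s n) =
      if s ≤ k ∧ k < s + n then contX s (k - s) * contX (k+1) (s + n - k - 1) else 0
  | 0, s => by
    rw [contX_zero, pderiv_one, if_neg (by omega)]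
  | 1, s => by
    rw [contX_one]
    by_cases h : k = s
    · subst h
      rw [pderiv_X_self, if_pos (by omega), show k - k = 0 from by omega,
        show k + 1 - k - 1 = 0 from by omega]
      simp [contX_zero]
    · rw [pderiv_X_of_ne (by omega), if_neg (by omega)]
  | (m+2), s => by
    have h1 := pderiv_contX k (m+1) (s+1)
    have h2 := pderiv_contX k m (s+2)
    rw [contX_succ_succ, map_sub, pderiv_mul]
    rcases Nat.lt_or_ge k s with h | h
    · rw [if_neg (by omega)] at h1
      rw [if_neg (by omega)] at h2
      rw [h1, h2, pderiv_X_of_ne (by omega), if_neg (by omega)]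
      ring
    rcases Nat.eq_or_lt_of_le h with rfl | h'
    · rw [if_neg (by omega)] at h1
      rw [if_neg (by omega)] at h2
      rw [h1, h2, pderiv_X_self, if_pos (by omega), show s - s = 0 from by omega,
        show s + (m+2) - s - 1 = m + 1 from by omega, contX_zero, one_mul]
      ring
    rcases Nat.lt_or_ge k (s+2) with h2' | h2'
    · have hk1 : k = s + 1 := by omega
      subst hk1
      rw [if_pos (by omega), show s + 1 - (s+1) = 0 from by omega,
        show s + 1 + (m+1) - (s+1) - 1 = m from by omega, contX_zero, one_mul] at h1
      rw [if_neg (by omega)] at h2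
      rw [h1, h2, pderiv_X_of_ne (by omega), if_pos (by omega),
        show s + 1 - s = 1 from by omega, show s + (m+2) - (s+1) - 1 = m from by omega,
        contX_one]
      ring
    rcases Nat.lt_or_ge k (s + (m+2)) with hin | hout
    · obtain ⟨d, rfl⟩ : ∃ d, k = s + 2 + d := ⟨k - s - 2, by omega⟩
      rw [if_pos (by omega), show s + 2 + d - (s+1) = d + 1 from by omega,
        show s + 1 + (m+1) - (s + 2 + d) - 1 = m - d - 1 from by omega] at h1
      rw [if_pos (by omega), show s + 2 + d - (s+2) = d from by omega,
        show s + 2 + m - (s + 2 + d) - 1 = m - d - 1 from by omega] at h2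
      rw [h1, h2, pderiv_X_of_ne (by omega), if_pos (by omega),
        show s + 2 + d - s = d + 2 from by omega,
        show s + (m+2) - (s + 2 + d) - 1 = m - d - 1 from by omega,
        contX_succ_succ s d]
      ring
    · rw [if_neg (by omega)] at h1
      rw [if_neg (by omega)] at h2
      rw [h1, h2, pderiv_X_of_ne (by omega), if_neg (by omega)]
      ring

/-- Evaluated continuant on a window of a sequence. -/
def contW {K : Type*} [CommRing K] (a : ℕ → K) (s n : ℕ) : K :=
  cont ((List.range n).map fun i => a (s + i))

section eval
variable {K : Type*} [Field K] (a : ℕ → K)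

theorem aeval_cont : ∀ l : List (MvPolynomial ℕ ℤ),
    MvPolynomial.aeval a (cont l) = cont (l.map (MvPolynomial.aeval a))
  | [] => by simp [cont]
  | [p] => by simp [cont]
  | p :: q :: l => by
    have h1 := aeval_cont (q :: l)
    have h2 := aeval_cont l
    simp only [cont, map_sub, map_mul, h1, h2, List.map_cons]

theorem aeval_contX (s n : ℕ) :
    MvPolynomial.aeval a (contX s n) = contW a s n := by
  rw [contX, aeval_cont, List.map_map, contW]
  refine congrArg _ (List.map_congr_left fun i _ => ?_)
  simp [Function.comp]

theorem contW_zero (s : ℕ) : contW a s 0 = 1 := by simp [contW, cont]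

theorem contW_one (s : ℕ) : contW a s 1 = a s := by simp [contW, cont]

theorem contW_front (s n : ℕ) :
    contW a s (n+2) = a s * contW a (s+1) (n+1) - contW a (s+2) n := by
  unfold contW
  have h : ∀ (b m : ℕ), (List.range (m+1)).map (fun i => a (b+i)) =
      a b :: (List.range m).map (fun i => a (b+1+i)) := by
    intro b m
    rw [List.range_succ_eq_map, List.map_cons, List.map_map]
    simp only [Nat.add_zero]
    refine congrArg _ (List.map_congr_left fun i _ => ?_)
    simp only [Function.comp]
    congr 1
    omega
  rw [h s (n+1), h (s+1) n, show s+1+1 = s+2 from rfl]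
  simp [cont]

theorem cont_append_pair {R : Type*} [CommRing R] : ∀ (l : List R) (y x : R),
    cont (l ++ [y, x]) = x * cont (l ++ [y]) - cont l
  | [], y, x => by simp [cont]; ring
  | [b], y, x => by simp [cont]; ring
  | b :: c :: l, y, x => by
    have h1 := cont_append_pair (c :: l) y x
    have h2 := cont_append_pair l y x
    simp only [List.cons_append] at *
    rw [show cont (b :: c :: (l ++ [y, x])) = b * cont (c :: (l ++ [y, x])) - cont (l ++ [y, x]) from rfl,
      h1, h2,
      show cont (b :: c :: (l ++ [y])) = b * cont (c :: (l ++ [y])) - cont (l ++ [y]) from rfl,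
      show cont (b :: c :: l) = b * cont (c :: l) - cont l from rfl]
    ring

theorem contW_back (s n : ℕ) :
    contW a s (n+2) = a (s+n+1) * contW a s (n+1) - contW a s n := by
  unfold contW
  rw [show n+2 = (n+1)+1 from rfl, List.range_succ, List.range_succ (n := n),
    List.map_append, List.map_append, List.map_singleton, List.map_singleton,
    List.append_assoc]
  rw [show ([a (s+n)] ++ [a (s+(n+1))] : List K) = [a (s+n), a (s+(n+1))] from rfl]
  rw [cont_append_pair, show s + (n+1) = s + n + 1 from rfl]

theorem contW_zero_pt : ∀ (n s : ℕ),
    contW (fun _ => (0:K)) s n = if Even n then (-1:K)^(n/2) else 0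
  | 0, s => by simp [contW_zero]
  | 1, s => by simp [contW_one]
  | (n+2), s => by
    rw [contW_front, contW_zero_pt n (s+2)]
    have he : Even (n+2) ↔ Even n := by simp [Nat.even_add]
    have hd : (n+2)/2 = n/2 + 1 := by omega
    by_cases h : Even n
    · rw [if_pos h, if_pos (he.mpr h), hd, pow_succ]
      ring
    · rw [if_neg h, if_neg (fun hh => h (he.mp hh))]
      ring

theorem prefix_not_both : ∀ j, contW a 1 j = 0 → contW a 1 (j+1) = 0 → False
  | 0, h0, _ => by rw [contW_zero] at h0; exact one_ne_zero h0
  | (j+1), h1, h2 => by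
    have hb := contW_back a 1 j
    rw [h1, h2] at hb
    refine prefix_not_both j ?_ h1
    linear_combination hb

theorem suffix_not_both : ∀ j, ∀ s, contW a (s+1) j = 0 → contW a s (j+1) = 0 → False
  | 0, s, h0, _ => by rw [contW_zero] at h0; exact one_ne_zero h0
  | (j+1), s, h1, h2 => by
    have hb := contW_front a s j
    rw [h1, h2] at hb
    exact suffix_not_both j (s+1) (by linear_combination hb) h1

theorem alt_lemma (n : ℕ)
    (hk : ∀ j, j < n → contW a 1 j * contW a (j+2) (n-1-j) = 0) :
    ∀ j, j < n → ((Even j → contW a 1 j ≠ 0 ∧ contW a (j+2) (n-1-j) = 0) ∧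
      (Odd j → contW a 1 j = 0 ∧ contW a (j+2) (n-1-j) ≠ 0)) := by
  intro j
  induction j with
  | zero =>
    intro hjn
    constructor
    · intro _
      have h1 : contW a 1 0 = 1 := contW_zero a 1
      refine ⟨by rw [h1]; exact one_ne_zero, ?_⟩
      have := hk 0 hjn
      rw [h1, one_mul] at this
      exact this
    · intro hodd
      exact absurd hodd (by simp)
  | succ j ih =>
    intro hjn
    have hj : j < n := by omega
    obtain ⟨ihe, iho⟩ := ih hj
    constructor
    · -- Even (j+1), so Odd j
      intro hev
      have hodd : Odd j := Nat.not_even_iff_odd.mp (Nat.even_add_one.mp hev)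
      obtain ⟨hq0, _⟩ := iho hodd
      have hqne : contW a 1 (j+1) ≠ 0 := fun h => prefix_not_both a j hq0 h
      have := hk (j+1) hjn
      rcases mul_eq_zero.mp this with h | h
      · exact absurd h hqne
      · exact ⟨hqne, h⟩
    · -- Odd (j+1), so Even j
      intro hodd
      have hev : Even j := Nat.not_odd_iff_even.mp (Nat.odd_add_one.mp hodd)
      obtain ⟨_, hs0⟩ := ihe hev
      have hsne : contW a (j+3) (n-1-(j+1)) ≠ 0 := by
        intro h
        refine suffix_not_both a (n-1-(j+1)) (j+2) (by exact h) ?_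
        rw [show n-1-(j+1)+1 = n-1-j from by omega]
        exact hs0
      have := hk (j+1) hjn
      rw [show j+1+2 = j+3 from rfl] at this
      rcases mul_eq_zero.mp this with h | h
      · exact ⟨h, hsne⟩
      · exact absurd h hsne

theorem prefix_even (n : ℕ)
    (hodd0 : ∀ j, j < n → Odd j → contW a 1 j = 0) :
    ∀ j, 2*j ≤ n → contW a 1 (2*j) = (-1)^j := by
  intro j
  induction j with
  | zero => intro _; simpa using contW_zero a 1
  | succ j ih =>
    intro hle
    have hb := contW_back a 1 (2*j)
    rw [hodd0 (2*j+1) (by omega) (by exact ⟨j, by omega⟩), mul_zero, zero_sub,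
      ih (by omega)] at hb
    rw [show 2*(j+1) = 2*j+2 from by omega, hb, pow_succ]
    ring

end eval

/-- The hypersurface `V(P_n(y_1,...,y_n) + λ) ⊆ 𝔸^n_K` has a singular `K`-point
if and only if `n = 2m` is even and `λ = (-1)^{m+1}`. -/
theorem continuant_hypersurface_singular_iff {K : Type*} [Field K] (n : ℕ) (hn : 1 ≤ n)
    (lam : K) :
    (∃ a : ℕ → K, MvPolynomial.aeval a (contX 1 n) + lam = 0 ∧
      ∀ k : ℕ, MvPolynomial.aeval a (MvPolynomial.pderiv k (contX 1 n)) = 0) ↔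
    (∃ m : ℕ, n = 2 * m ∧ lam = (-1 : K) ^ (m + 1)) := by
  constructor
  · rintro ⟨a, h0, hd⟩
    rw [aeval_contX] at h0
    have hk : ∀ j, j < n → contW a 1 j * contW a (j+2) (n-1-j) = 0 := by
      intro j hj
      have h := hd (j+1)
      rw [pderiv_contX, if_pos (by omega), map_mul, aeval_contX, aeval_contX,
        show j+1-1 = j from by omega, show j+1+1 = j+2 from rfl,
        show 1+n-(j+1)-1 = n-1-j from by omega] at h
      exact h
    have halt := alt_lemma a n hk
    have hev : Even n := by
      by_contra hne
      have hodd : Odd n := Nat.not_even_iff_odd.mp hne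
      have hprev : Even (n-1) := by
        rcases hodd with ⟨m, rfl⟩; exact ⟨m, by omega⟩
      have h := ((halt (n-1) (by omega)).1 hprev).2
      rw [show n-1-(n-1) = 0 from by omega, contW_zero] at h
      exact one_ne_zero h
    obtain ⟨m, hm⟩ := hev
    have hm2 : n = 2*m := by omega
    have hodd0 : ∀ j, j < n → Odd j → contW a 1 j = 0 := fun j hj ho => ((halt j hj).2 ho).1
    have hQ := prefix_even a n hodd0 m (by omega)
    rw [← hm2] at hQ
    refine ⟨m, hm2, ?_⟩
    rw [hQ] at h0
    linear_combination h0
  · rintro ⟨m, rfl, rfl⟩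
    refine ⟨fun _ => 0, ?_, ?_⟩
    · rw [aeval_contX, contW_zero_pt, if_pos ⟨m, by omega⟩,
        show 2*m/2 = m from by omega, pow_succ]
      ring
    · intro k
      rw [pderiv_contX]
      by_cases h : 1 ≤ k ∧ k < 1 + 2*m
      · rw [if_pos h, map_mul, aeval_contX, aeval_contX, contW_zero_pt, contW_zero_pt]
        rcases Nat.even_or_odd (k-1) with he | ho
        · have hno : ¬ Even (1 + 2*m - k - 1) := by
            rw [Nat.even_iff] at he ⊢
            omega
          rw [if_neg hno, mul_zero]
        · rw [if_neg (Nat.not_even_iff_odd.mpr ho), zero_mul]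
      · rw [if_neg h, map_zero]
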